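/- Let m ≥ 4, let G = (ℤ/mℤ)², let g ∈ G, and let S = f₁^[m−1] · f₂^[m−1] · (f₁+f₂) ∈ Υ_nu(G), where (f₁,f₂) is a basis of G. If S' = f₂^[−1] · (f₁+f₂)^[−1] · S · (f₂+g) · (f₁+f₂−g) ∈ Υ(G), then g ∈ ⟨f₁⟩. -/

import Mathlib

/-- `(e₁, e₂)` is a basis of the abelian group `G`, i.e. `G = ⟨e₁⟩ ⊕ ⟨e₂⟩`. -/
def IsBasis {G : Type*} [AddCommGroup G] (e₁ e₂ : G) : Prop :=
  AddSubgroup.zmultiples e₁ ⊔ AddSubgroup.zmultiples e₂ = ⊤ ∧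
    AddSubgroup.zmultiples e₁ ⊓ AddSubgroup.zmultiples e₂ = ⊥

/-- `Υ(G)` for `G = (ℤ/mℤ)²`: all sequences `e₁^[m-1] · ∏_{i=1}^m (xᵢe₁ + e₂)` for some
basis `(e₁, e₂)` and `x₁, …, x_m ∈ [0, m-1]` with `x₁ + ⋯ + x_m ≡ 1 (mod m)`. -/
def Upsilon (m : ℕ) : Set (Multiset (ZMod m × ZMod m)) :=
  { S | ∃ (e₁ e₂ : ZMod m × ZMod m) (x : Fin m → ℕ),
      IsBasis e₁ e₂ ∧ (∀ i, x i ≤ m - 1) ∧ (∑ i, x i) % m = 1 % m ∧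
      S = Multiset.replicate (m - 1) e₁ +
          Multiset.map (fun i => x i • e₁ + e₂) (Finset.univ : Finset (Fin m)).val }

/-- `Υ_u(G)`: members of `Υ(G)` with a unique term of multiplicity `m - 1`. -/
def UpsilonU (m : ℕ) : Set (Multiset (ZMod m × ZMod m)) :=
  { S | S ∈ Upsilon m ∧ ∃! g, S.count g = m - 1 }

/-- `Υ_nu(G)`: sequences `e₁^[m-1] · e₂^[m-1] · (e₁ + e₂)` for some basis `(e₁, e₂)`. -/
def UpsilonNU (m : ℕ) : Set (Multiset (ZMod m × ZMod m)) :=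
  { S | ∃ (e₁ e₂ : ZMod m × ZMod m), IsBasis e₁ e₂ ∧
      S = Multiset.replicate (m - 1) e₁ + Multiset.replicate (m - 1) e₂ + {e₁ + e₂} }

/-!
Argue by contradiction, assuming `g ∉ ⟨f₁⟩`. Since `S' ∈ Υ(G)`, it splits as `e₁^[m-1] · T`
with `|T| = m`, `e₁ ∉ T` and `T ⊆ e₂ + ⟨e₁⟩`. On the other hand
`S' = f₁^[m-1] · f₂^[m-2] · (f₂+g) · (f₁+f₂-g)`. If `e₁ ≠ f₁`, then `T` would contain `f₁^[m-1]`
together with `f₂^[m-2]` (if `e₁ ≠ f₂`) or with the two new terms (if `e₁ = f₂`; they differ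
from `f₂` because `g ∉ ⟨f₁⟩`), i.e. more than `m` terms since `m ≥ 4`. So `e₁ = f₁`, and then
`f₂` and `f₂ + g` both lie in `T ⊆ e₂ + ⟨f₁⟩`, whence `g ∈ ⟨f₁⟩`.
-/

open Multiset AddSubgroup

theorem IsBasis.notMem_zmultiples {G : Type*} [AddCommGroup G] {e₁ e₂ : G}
    (hG : ¬IsAddCyclic G) (h : IsBasis e₁ e₂) : e₂ ∉ zmultiples e₁ := by
  intro he₂
  refine hG ⟨e₁, fun x => ?_⟩
  have hx : x ∈ zmultiples e₁ ⊔ zmultiples e₂ := h.1 ▸ mem_top x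
  rwa [sup_eq_left.mpr (zmultiples_le.mpr he₂), mem_zmultiples_iff] at hx

theorem ZMod.not_isAddCyclic_prod_self {m : ℕ} (hm : m ≠ 1) :
    ¬IsAddCyclic (ZMod m × ZMod m) := by
  simp [AddGroup.isAddCyclic_prod_iff, Nat.card_zmod, hm]

theorem Multiset.le_of_le_replicate_add {α : Type*} {A M : Multiset α} {e : α} {k : ℕ}
    (hA : A ≤ replicate k e + M) (he : e ∉ A) : A ≤ M := by
  classical
  rw [le_iff_count] at hA ⊢
  intro a
  by_cases ha : a = e
  · simp [ha, count_eq_zero.mpr he]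
  · simpa [count_replicate, Ne.symm ha] using hA a

theorem Multiset.replicate_add_replicate_add_singleton_sub_pair {α : Type*} [DecidableEq α]
    (a b c : α) (n : ℕ) :
    replicate (n + 1) a + replicate (n + 1) b + {c} - {b, c} =
      replicate (n + 1) a + replicate n b := by
  have : replicate (n + 1) a + replicate (n + 1) b + {c} =
      replicate (n + 1) a + replicate n b + {b, c} := by
    rw [replicate_succ b]
    simp [add_assoc]
  rw [this, Multiset.add_sub_cancel_right]

theorem exists_eq_replicate_add_of_mem_upsilon {m : ℕ} (hm : m ≠ 1)
    {S : Multiset (ZMod m × ZMod m)} (hS : S ∈ Upsilon m) :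
    ∃ e₁ e₂ M, S = replicate (m - 1) e₁ + M ∧ card M = m ∧ e₁ ∉ M ∧
      ∀ a ∈ M, a - e₂ ∈ zmultiples e₁ := by
  obtain ⟨e₁, e₂, x, hbasis, -, -, rfl⟩ := hS
  have he₂ := hbasis.notMem_zmultiples (ZMod.not_isAddCyclic_prod_self hm)
  refine ⟨e₁, e₂, _, rfl, by simp, ?_, ?_⟩
  · simp only [Multiset.mem_map, not_exists, not_and]
    intro i _ hi
    refine he₂ ⟨1 - (x i : ℤ), ?_⟩
    show (1 - (x i : ℤ)) • e₁ = e₂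
    rw [sub_smul, one_smul, natCast_zsmul, eq_sub_of_add_eq' hi]
  · simp only [Multiset.mem_map]
    rintro _ ⟨i, -, rfl⟩
    simpa using nsmul_mem (mem_zmultiples e₁) (x i)

theorem stmt_7_general (m : ℕ) (hm : 4 ≤ m) (g f₁ f₂ : ZMod m × ZMod m)
    (S : Multiset (ZMod m × ZMod m))
    (hS : S = Multiset.replicate (m - 1) f₁ + Multiset.replicate (m - 1) f₂ + {f₁ + f₂})
    (S' : Multiset (ZMod m × ZMod m))
    (hS' : S' = (S - {f₂, f₁ + f₂}) + {f₂ + g, f₁ + f₂ - g})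
    (hS'U : S' ∈ Upsilon m) :
    g ∈ AddSubgroup.zmultiples f₁ := by
  by_contra hg
  have hg₀ : f₂ + g ≠ f₂ := fun h => hg (add_eq_left.mp h ▸ zero_mem _)
  have hgf₁ : f₁ + f₂ - g ≠ f₂ := fun h => hg (by
    rw [show g = f₁ by linear_combination -h]; exact mem_zmultiples f₁)
  have hS'f : S' = replicate (m - 1) f₁ + replicate (m - 2) f₂ + {f₂ + g, f₁ + f₂ - g} := by
    rw [hS', hS, show m - 1 = m - 2 + 1 by omega, replicate_add_replicate_add_singleton_sub_pair]
  obtain ⟨e₁, e₂, M, hS'M, hcard, he₁M, hcoset⟩ :=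
    exists_eq_replicate_add_of_mem_upsilon (by omega) hS'U
  have card_le : ∀ A ≤ S', e₁ ∉ A → card A ≤ m := fun A hA he =>
    (card_le_card (le_of_le_replicate_add (hS'M ▸ hA) he)).trans_eq hcard
  have he₁ : e₁ = f₁ := by
    by_contra hf₁
    obtain rfl | hf₂ := eq_or_ne e₁ f₂
    · have := card_le (replicate (m - 1) f₁ + {e₁ + g, f₁ + e₁ - g})
        (hS'f ▸ add_le_add_left (le_add_right le_rfl) _)
        (by simp only [mem_add, mem_replicate, insert_eq_cons, mem_cons, mem_singleton, not_or]
            exact ⟨fun h => hf₁ h.2, hg₀.symm, hgf₁.symm⟩)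
      simp only [card_add, card_replicate, insert_eq_cons, card_cons, card_singleton] at this
      omega
    · have := card_le (replicate (m - 1) f₁ + replicate (m - 2) f₂)
        (hS'f ▸ le_add_right le_rfl) (by simp [mem_replicate, hf₁, hf₂])
      simp only [card_add, card_replicate] at this
      omega
  subst e₁
  have hM : M = replicate (m - 2) f₂ + {f₂ + g, f₁ + f₂ - g} := by
    rw [hS'M, add_assoc] at hS'f
    exact add_left_cancel hS'f
  have hf₂ : f₂ ∈ M := by
    rw [hM]; exact mem_add.mpr (.inl (mem_replicate.mpr ⟨by omega, rfl⟩))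
  have hf₂g : f₂ + g ∈ M := by simp [hM]
  exact hg (by simpa using sub_mem (hcoset _ hf₂g) (hcoset _ hf₂))

theorem stmt_7 (m : ℕ) (hm : 4 ≤ m) (g f₁ f₂ : ZMod m × ZMod m)
    (hbasis : IsBasis f₁ f₂)
    (S : Multiset (ZMod m × ZMod m))
    (hS : S = Multiset.replicate (m - 1) f₁ + Multiset.replicate (m - 1) f₂ + {f₁ + f₂})
    (hSNU : S ∈ UpsilonNU m)
    (S' : Multiset (ZMod m × ZMod m))
    (hS' : S' = (S - {f₂, f₁ + f₂}) + {f₂ + g, f₁ + f₂ - g})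
    (hS'U : S' ∈ Upsilon m) :
    g ∈ AddSubgroup.zmultiples f₁ :=
  stmt_7_general m hm g f₁ f₂ S hS S' hS' hS'U
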